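/- For each 0 ≤ k ≤ n-1, F_k(y, w*, ξ) = w*·B_k(y)·ξ satisfies F_k(y + ξ v*, w*, ξ) = F_k(y, w*, ξ) for every row vector v*, and also F_k(y + u w*, w*, ξ) = F_k(y, w*, ξ) for every column vector u; hence F_k is invariant under the coadjoint action of the group GL(n) ⋉ (ℂ^n ⊕ (ℂ^n)*). -/

import Mathlib

open Matrix BigOperators

/-- The signed coefficients of the characteristic polynomial:
`det (t•I - x) = t^n - p 1 x * t^(n-1) - ⋯ - p n x`. -/
noncomputable def charCoeff (n : ℕ) (k : ℕ) (x : Matrix (Fin n) (Fin n) ℂ) : ℂ :=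
  -(x.charpoly.coeff (n - k))

/-- `B n k x = x^k - p 1 x • x^(k-1) - ⋯ - p k x • I`. -/
noncomputable def gradB (n : ℕ) (k : ℕ) (x : Matrix (Fin n) (Fin n) ℂ) :
    Matrix (Fin n) (Fin n) ℂ :=
  x ^ k - ∑ i ∈ Finset.Icc 1 k, charCoeff n i x • x ^ (k - i)


/-- The invariant `F_k(y, w*, ξ) = w* B_k(y) ξ`. -/
noncomputable def Finv (n : ℕ) (k : ℕ) (y : Matrix (Fin n) (Fin n) ℂ)
    (wstar : Matrix (Fin 1) (Fin n) ℂ) (xi : Matrix (Fin n) (Fin 1) ℂ) : ℂ :=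
  (wstar * gradB n k y * xi) 0 0

/-!
Iterating `B_{k+1}(y) = y B_k(y) - p_{k+1}(y)` and using Cayley–Hamilton (`B_n(y) = 0`) shows
that `∑ₖ tⁿ⁻¹⁻ᵏ B_k(y)` is the adjugate of `t - y`. The matrix determinant lemma then says that the
rank-one perturbation `y ↦ y + a b` changes `p_{k+1}` by exactly `b B_k(y) a`. Fed back into the
recursion, this gives `B_k(y + ξ v*) ξ = B_k(y) ξ` by induction on `k`; the statement for
`y + u w*` is its transpose, and conjugation invariance comes from that of the characteristic
polynomial.
-/

theorem mul_fin_one_eq_smul {R m : Type*} [CommSemiring R] (M : Matrix m (Fin 1) R)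
    (s : Matrix (Fin 1) (Fin 1) R) : M * s = s 0 0 • M := by
  ext i j
  rw [Matrix.mul_apply, Fin.sum_univ_one, Matrix.smul_apply, smul_eq_mul, Fin.fin_one_eq_zero j,
    mul_comm]

theorem det_add_mul_eq_det_add_adjugate {R m ι : Type*} [CommRing R] [IsDomain R]
    [Fintype m] [DecidableEq m] [Unique ι] {A : Matrix m m R} (hA : A.det ≠ 0)
    (U : Matrix m ι R) (V : Matrix ι m R) :
    (A + U * V).det = A.det + (V * adjugate A * U) default default := by
  set f := algebraMap R (FractionRing R)
  have hf : Function.Injective f := IsFractionRing.injective R _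
  set A' := f.mapMatrix A
  have hA' : A'.det ≠ 0 := by
    rw [← RingHom.map_det]
    exact (map_ne_zero_iff f hf).mpr hA
  apply hf
  calc f (A + U * V).det = (A' + U.map f * V.map f).det := by
        rw [RingHom.map_det, map_add, RingHom.mapMatrix_apply, RingHom.mapMatrix_apply,
          Matrix.map_mul]; rfl
    _ = A'.det * (1 + (V.map f * A'⁻¹ * U.map f) default default) := by
        rw [det_add_mul _ _ hA'.isUnit, det_unique (1 + _), Matrix.add_apply, one_apply_eq]
    _ = A'.det + (V.map f * adjugate A' * U.map f) default default := by
        rw [inv_def, Ring.inverse_eq_inv', Matrix.mul_smul, Matrix.smul_mul, Matrix.smul_apply,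
          smul_eq_mul, mul_add, mul_one, mul_inv_cancel_left₀ hA']
    _ = f (A.det + (V * adjugate A * U) default default) := by
        rw [map_add, RingHom.map_det, ← RingHom.map_adjugate, RingHom.mapMatrix_apply,
          RingHom.mapMatrix_apply, ← Matrix.map_mul, ← Matrix.map_mul, map_apply]; rfl

section GradB

open Polynomial

variable {n : ℕ}

theorem gradB_eq_sum_range (k : ℕ) (x : Matrix (Fin n) (Fin n) ℂ) :
    gradB n k x = x ^ k - ∑ i ∈ Finset.range k, charCoeff n (i + 1) x • x ^ (k - 1 - i) := by
  rw [gradB, ← Finset.Ico_add_one_right_eq_Icc, Finset.sum_Ico_eq_sum_range]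
  simp only [Nat.add_sub_cancel, add_comm 1, Nat.sub_sub]

theorem gradB_zero (x : Matrix (Fin n) (Fin n) ℂ) : gradB n 0 x = 1 := by
  simp [gradB]

theorem gradB_succ (k : ℕ) (x : Matrix (Fin n) (Fin n) ℂ) :
    gradB n (k + 1) x = x * gradB n k x - charCoeff n (k + 1) x • 1 := by
  rw [gradB_eq_sum_range, gradB_eq_sum_range, Finset.sum_range_succ, mul_sub, Finset.mul_sum,
    ← pow_succ']
  have hshift : ∀ i ∈ Finset.range k, x * (charCoeff n (i + 1) x • x ^ (k - 1 - i)) =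
      charCoeff n (i + 1) x • x ^ (k + 1 - 1 - i) := by
    intro i hi
    rw [mul_smul_comm, ← pow_succ']
    congr 2
    have := Finset.mem_range.mp hi
    omega
  rw [Finset.sum_congr rfl hshift]
  simp only [add_tsub_cancel_right, tsub_self, pow_zero]
  abel

theorem gradB_transpose (k : ℕ) (x : Matrix (Fin n) (Fin n) ℂ) :
    gradB n k xᵀ = (gradB n k x)ᵀ := by
  simp [gradB, charCoeff, charpoly_transpose, transpose_pow, transpose_sum]

theorem gradB_conj (k : ℕ) {g : Matrix (Fin n) (Fin n) ℂ} (hg : IsUnit g.det)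
    (x : Matrix (Fin n) (Fin n) ℂ) : gradB n k (g * x * g⁻¹) = g * gradB n k x * g⁻¹ := by
  have hpow : ∀ m : ℕ, (g * x * g⁻¹) ^ m = g * x ^ m * g⁻¹ :=
    Units.conj_pow (nonsingInvUnit g hg) x
  have hchar : (g * x * g⁻¹).charpoly = x.charpoly :=
    charpoly_units_conj (nonsingInvUnit g hg) x
  simp only [gradB, charCoeff, hchar, hpow, mul_sub, sub_mul, Finset.mul_sum, Finset.sum_mul,
    mul_smul_comm, smul_mul_assoc]

theorem charpoly_eq_X_pow_sub_sum (x : Matrix (Fin n) (Fin n) ℂ) :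
    x.charpoly = X ^ n - ∑ k ∈ Finset.range n, C (charCoeff n (k + 1) x) * X ^ (n - 1 - k) := by
  have h := (charpoly_monic x).as_sum
  rw [charpoly_natDegree_eq_dim, Fintype.card_fin, ← Finset.sum_range_reflect] at h
  rw [h]
  simp [charCoeff, Nat.sub_sub, add_comm 1]

theorem gradB_self (x : Matrix (Fin n) (Fin n) ℂ) : gradB n n x = 0 := by
  rw [← aeval_self_charpoly x, charpoly_eq_X_pow_sub_sum, gradB_eq_sum_range]
  simp [Algebra.smul_def]

theorem charmatrix_mul_map_gradB (k : ℕ) (x : Matrix (Fin n) (Fin n) ℂ) :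
    charmatrix x * (gradB n k x).map C =
      (X : ℂ[X]) • (gradB n k x).map C - (gradB n (k + 1) x).map C
        - C (charCoeff n (k + 1) x) • 1 := by
  have h : x * gradB n k x = gradB n (k + 1) x + charCoeff n (k + 1) x • 1 := by
    rw [gradB_succ, sub_add_cancel]
  rw [charmatrix, sub_mul, RingHom.mapMatrix_apply, ← Matrix.map_mul, h,
    Matrix.map_add _ (map_add C), Matrix.map_smulₛₗ _ C _ (map_mul C _),
    Matrix.map_one _ (map_zero C) (map_one C), scalar_apply, ← smul_eq_diagonal_mul, sub_sub]

theorem charmatrix_mul_sum_gradB (x : Matrix (Fin n) (Fin n) ℂ) :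
    charmatrix x * ∑ k ∈ Finset.range n, (X : ℂ[X]) ^ (n - 1 - k) • (gradB n k x).map C =
      x.charpoly • 1 := by
  set f : ℕ → Matrix (Fin n) (Fin n) ℂ[X] :=
    fun k => (X : ℂ[X]) ^ (n - k) • (gradB n k x).map C
  have hterm : ∀ k ∈ Finset.range n,
      charmatrix x * ((X : ℂ[X]) ^ (n - 1 - k) • (gradB n k x).map C) =
        f k - f (k + 1) - (C (charCoeff n (k + 1) x) * X ^ (n - 1 - k)) • 1 := by
    intro k hk
    have hexp : n - k = n - 1 - k + 1 := by have := Finset.mem_range.mp hk; omega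
    rw [mul_smul_comm, charmatrix_mul_map_gradB, smul_sub, smul_sub, smul_smul, ← pow_succ,
      smul_smul, mul_comm, ← hexp, Nat.sub_sub, add_comm 1 k]
  rw [Finset.mul_sum, Finset.sum_congr rfl hterm, Finset.sum_sub_distrib, Finset.sum_range_sub',
    ← Finset.sum_smul, charpoly_eq_X_pow_sub_sum, sub_smul]
  simp [f, gradB_zero, gradB_self]

theorem adjugate_charmatrix (x : Matrix (Fin n) (Fin n) ℂ) :
    adjugate (charmatrix x) =
      ∑ k ∈ Finset.range n, (X : ℂ[X]) ^ (n - 1 - k) • (gradB n k x).map C := by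
  have hreg : IsLeftRegular (charmatrix x) :=
    (isRegular_of_isLeftRegular_det (charpoly_monic x).isRegular.left).left
  refine (hreg (?_ : charmatrix x * _ = charmatrix x * _)).symm
  rw [charmatrix_mul_sum_gradB, mul_adjugate]
  rfl

theorem charmatrix_add_mul {ι : Type*} [Fintype ι] (x : Matrix (Fin n) (Fin n) ℂ)
    (a : Matrix (Fin n) ι ℂ) (b : Matrix ι (Fin n) ℂ) :
    charmatrix (x + a * b) = charmatrix x + -a.map C * b.map C := by
  simp only [charmatrix, map_add, RingHom.mapMatrix_apply, Matrix.map_mul, Matrix.neg_mul]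
  abel

theorem charpoly_add_mul (x : Matrix (Fin n) (Fin n) ℂ)
    (a : Matrix (Fin n) (Fin 1) ℂ) (b : Matrix (Fin 1) (Fin n) ℂ) :
    (x + a * b).charpoly =
      x.charpoly - ∑ k ∈ Finset.range n, C ((b * gradB n k x * a) 0 0) * X ^ (n - 1 - k) := by
  have h := det_add_mul_eq_det_add_adjugate (charpoly_monic x).ne_zero (-a.map C) (b.map C)
  rw [← charmatrix_add_mul] at h
  refine h.trans ?_
  rw [adjugate_charmatrix, sub_eq_add_neg, Matrix.mul_sum, Matrix.sum_mul, Matrix.sum_apply,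
    ← Finset.sum_neg_distrib]
  congr 1
  refine Finset.sum_congr rfl fun k _ => ?_
  rw [Matrix.mul_smul, Matrix.smul_mul, Matrix.mul_neg, ← Matrix.map_mul, ← Matrix.map_mul,
    Matrix.smul_apply, Matrix.neg_apply, Matrix.map_apply, smul_eq_mul, mul_neg, mul_comm]
  rfl

theorem charCoeff_add_mul {j : ℕ} (hj : j < n) (x : Matrix (Fin n) (Fin n) ℂ)
    (a : Matrix (Fin n) (Fin 1) ℂ) (b : Matrix (Fin 1) (Fin n) ℂ) :
    charCoeff n (j + 1) (x + a * b) = charCoeff n (j + 1) x + (b * gradB n j x * a) 0 0 := by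
  rw [charCoeff, charCoeff, charpoly_add_mul, coeff_sub, finsetSum_coeff,
    Finset.sum_eq_single_of_mem j (Finset.mem_range.mpr hj), coeff_C_mul_X_pow,
    if_pos (by omega), neg_sub', sub_neg_eq_add]
  intro k hk hkj
  rw [coeff_C_mul_X_pow, if_neg (by have := Finset.mem_range.mp hk; omega)]

theorem gradB_add_mul_mul_self {k : ℕ} (hk : k ≤ n) (x : Matrix (Fin n) (Fin n) ℂ)
    (ξ : Matrix (Fin n) (Fin 1) ℂ) (v : Matrix (Fin 1) (Fin n) ℂ) :
    gradB n k (x + ξ * v) * ξ = gradB n k x * ξ := by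
  induction k with
  | zero => rw [gradB_zero, gradB_zero]
  | succ k ih =>
    have hξ : ξ * v * gradB n k x * ξ = (v * gradB n k x * ξ) 0 0 • ξ := by
      rw [Matrix.mul_assoc, Matrix.mul_assoc, ← Matrix.mul_assoc v, mul_fin_one_eq_smul]
    rw [gradB_succ, gradB_succ, Matrix.sub_mul, Matrix.sub_mul, Matrix.mul_assoc, ih (by omega),
      charCoeff_add_mul (by omega), ← Matrix.mul_assoc, Matrix.add_mul, Matrix.add_mul, hξ]
    simp only [add_smul, Matrix.add_mul, Matrix.smul_mul, Matrix.one_mul]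
    abel

theorem mul_gradB_add_mul {k : ℕ} (hk : k ≤ n) (x : Matrix (Fin n) (Fin n) ℂ)
    (u : Matrix (Fin n) (Fin 1) ℂ) (w : Matrix (Fin 1) (Fin n) ℂ) :
    w * gradB n k (x + u * w) = w * gradB n k x := by
  apply Matrix.transpose_injective
  rw [transpose_mul, transpose_mul, ← gradB_transpose, ← gradB_transpose, transpose_add,
    transpose_mul, gradB_add_mul_mul_self hk]

theorem Finv_add_col_mul {k : ℕ} (hk : k ≤ n) (y : Matrix (Fin n) (Fin n) ℂ)
    (wstar : Matrix (Fin 1) (Fin n) ℂ) (xi : Matrix (Fin n) (Fin 1) ℂ)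
    (vstar : Matrix (Fin 1) (Fin n) ℂ) :
    Finv n k (y + xi * vstar) wstar xi = Finv n k y wstar xi := by
  rw [Finv, Finv, Matrix.mul_assoc, Matrix.mul_assoc, gradB_add_mul_mul_self hk]

theorem Finv_add_mul_row {k : ℕ} (hk : k ≤ n) (y : Matrix (Fin n) (Fin n) ℂ)
    (wstar : Matrix (Fin 1) (Fin n) ℂ) (xi : Matrix (Fin n) (Fin 1) ℂ)
    (u : Matrix (Fin n) (Fin 1) ℂ) :
    Finv n k (y + u * wstar) wstar xi = Finv n k y wstar xi := by
  rw [Finv, Finv, mul_gradB_add_mul hk]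

theorem Finv_conj (k : ℕ) {g : Matrix (Fin n) (Fin n) ℂ} (hg : IsUnit g.det)
    (y : Matrix (Fin n) (Fin n) ℂ) (wstar : Matrix (Fin 1) (Fin n) ℂ)
    (xi : Matrix (Fin n) (Fin 1) ℂ) :
    Finv n k (g * y * g⁻¹) (wstar * g⁻¹) (g * xi) = Finv n k y wstar xi := by
  rw [Finv, Finv, gradB_conj k hg]
  simp only [Matrix.mul_assoc, nonsing_inv_mul_cancel_left _ _ hg]

end GradB

/-- `F_k` is invariant under the translations `y ↦ y + ξ v*` and `y ↦ y + u w*`,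
hence under the full coadjoint action of `GL(n) ⋉ (V ⊕ V*)`. -/
theorem stmt9 (n : ℕ) (k : ℕ) (hk : k ≤ n - 1) (y : Matrix (Fin n) (Fin n) ℂ)
    (wstar : Matrix (Fin 1) (Fin n) ℂ) (xi : Matrix (Fin n) (Fin 1) ℂ) :
    (∀ vstar : Matrix (Fin 1) (Fin n) ℂ,
        Finv n k (y + xi * vstar) wstar xi = Finv n k y wstar xi) ∧
    (∀ u : Matrix (Fin n) (Fin 1) ℂ,
        Finv n k (y + u * wstar) wstar xi = Finv n k y wstar xi) ∧
    (∀ (g : Matrix (Fin n) (Fin n) ℂ), IsUnit g.det →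
      ∀ (u : Matrix (Fin n) (Fin 1) ℂ) (vstar : Matrix (Fin 1) (Fin n) ℂ),
        Finv n k (g * (y + u * wstar + xi * vstar) * g⁻¹) (wstar * g⁻¹) (g * xi)
          = Finv n k y wstar xi) := by
  have hkn : k ≤ n := by omega
  refine ⟨Finv_add_col_mul hkn y wstar xi, Finv_add_mul_row hkn y wstar xi,
    fun g hg u vstar => ?_⟩
  rw [Finv_conj k hg, Finv_add_col_mul hkn, Finv_add_mul_row hkn]
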